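/- arXiv:2501.14006 — 3 statements merged into one kernel-verified Lean document; each statement's English description precedes it below -/
import Mathlib

section
/- Let φ : X → Z map a covariate space to a latent space, let ν⁰, ν¹ : Z → ℝ be L-Lipschitz and ν̂⁰, ν̂¹ : Z → ℝ be L̂-Lipschitz. Given a finite dataset of n samples (x_i, t_i, y_i) with y_i = ν^{t_i}(φ(x_i)), define for each i its mirror twin x_i^m as a sample with opposite treatment t_j = 1 - t_i minimizing ‖φ(x_i) - φ(x_j)‖, and define the counterfactual importance weight w_j as the number of indices i whose mirror twin is sample j. Then the empirical PEHE (1/n) ∑_i ((ν̂¹ - ν̂⁰)(φ(x_i)) - (ν¹ - ν⁰)(φ(x_i)))² is at most (4/n)[ ∑_i (1 + w_i)((ν̂^{t_i} ∘ φ)(x_i) - y_i)² + (L² + L̂²) ∑_i ‖φ(x_i) - φ(x_i^m)‖² ]. -/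
/-!
Fix a sample `i` with treatment `b`, latent point `z = φ(xᵢ)`, and mirror twin `j` with treatment
`!b` and latent point `z'`. Up to sign, the effect error at `z` is the sum of the factual error of
`ν̂ᵇ` at `z`, the factual error of `ν̂^{!b}` at `z'`, and the displacements of `ν̂^{!b}` and `ν^{!b}`
between `z'` and `z`. The last two are controlled by the Lipschitz constants, and
`(a + b + c + e)² ≤ 4 (a² + b² + c² + e²)` gives a pointwise bound. Summing over `i`, the twin's
factual error `εⱼ²` is counted once for every sample whose twin is `j`, i.e. `wⱼ` times.
-/

open Finset

lemma sq_add_add_add_le_four_mul (a b c e : ℝ) :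
    (a + b + c + e) ^ 2 ≤ 4 * (a ^ 2 + b ^ 2 + c ^ 2 + e ^ 2) := by
  nlinarith [sq_nonneg (a - b), sq_nonneg (a - c), sq_nonneg (a - e),
    sq_nonneg (b - c), sq_nonneg (b - e), sq_nonneg (c - e)]

lemma LipschitzWith.sq_sub_le {α : Type*} [PseudoMetricSpace α] {K : NNReal} {f : α → ℝ}
    (hf : LipschitzWith K f) (a b : α) : (f a - f b) ^ 2 ≤ (K : ℝ) ^ 2 * dist a b ^ 2 := by
  rw [← sq_abs, ← Real.dist_eq, ← mul_pow]
  exact pow_le_pow_left₀ dist_nonneg (hf.dist_le_mul a b) 2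

lemma effect_error_sq_le_four_mul {E : Type*} (μ μhat : Bool → E → ℝ) (b : Bool)
    (z z' : E) :
    ((μhat true z - μhat false z) - (μ true z - μ false z)) ^ 2 ≤
      4 * ((μhat b z - μ b z) ^ 2 + (μhat (!b) z' - μ (!b) z') ^ 2
        + (μhat (!b) z' - μhat (!b) z) ^ 2 + (μ (!b) z - μ (!b) z') ^ 2) := by
  calc ((μhat true z - μhat false z) - (μ true z - μ false z)) ^ 2
      = ((μhat b z - μ b z) + -(μhat (!b) z' - μ (!b) z')
          + (μhat (!b) z' - μhat (!b) z) + (μ (!b) z - μ (!b) z')) ^ 2 := by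
        cases b <;> simp only [Bool.not_false, Bool.not_true] <;> ring
    _ ≤ _ := by
        rw [← neg_sq (μhat (!b) z' - μ (!b) z')]
        exact sq_add_add_add_le_four_mul _ _ _ _

lemma effect_error_sq_le_of_lipschitz {E : Type*} [PseudoMetricSpace E] {L Lhat : NNReal}
    {μ μhat : Bool → E → ℝ} (hμ : ∀ b, LipschitzWith L (μ b))
    (hμhat : ∀ b, LipschitzWith Lhat (μhat b)) (b : Bool) (z z' : E) :
    ((μhat true z - μhat false z) - (μ true z - μ false z)) ^ 2 ≤
      4 * ((μhat b z - μ b z) ^ 2 + (μhat (!b) z' - μ (!b) z') ^ 2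
        + ((L : ℝ) ^ 2 + (Lhat : ℝ) ^ 2) * dist z z' ^ 2) := by
  have hhat := (hμhat (!b)).sq_sub_le z' z
  have htrue := (hμ (!b)).sq_sub_le z z'
  rw [dist_comm] at hhat
  linarith [effect_error_sq_le_four_mul μ μhat b z z']

lemma Finset.sum_comp_eq_sum_card_fiber_mul {ι κ R : Type*} [Fintype ι] [Fintype κ]
    [DecidableEq κ] [NonAssocSemiring R] (m : ι → κ) (f : κ → R) :
    ∑ i, f (m i) = ∑ j, (#{i | m i = j} : R) * f j := by
  rw [← sum_fiberwise' univ m f]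
  simp only [sum_const, nsmul_eq_mul]

theorem stmt_3_general {X : Type*} {d n : ℕ}
    (φ : X → EuclideanSpace ℝ (Fin d)) (L Lhat : NNReal)
    (ν νhat : Bool → EuclideanSpace ℝ (Fin d) → ℝ)
    (hν : ∀ b, LipschitzWith L (ν b)) (hνhat : ∀ b, LipschitzWith Lhat (νhat b))
    (x : Fin n → X) (t : Fin n → Bool) (y : Fin n → ℝ)
    (hy : ∀ i, y i = ν (t i) (φ (x i)))
    (m : Fin n → Fin n)
    (hmt : ∀ i, t (m i) = !(t i))
    (w : Fin n → ℕ) (hw : ∀ j, w j = (Finset.univ.filter fun i => m i = j).card) :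
    (1 / n : ℝ) * ∑ i, ((νhat true (φ (x i)) - νhat false (φ (x i)))
        - (ν true (φ (x i)) - ν false (φ (x i))))^2 ≤
      (4 / n : ℝ) * ((∑ i, (1 + (w i : ℝ)) * (νhat (t i) (φ (x i)) - y i)^2)
        + ((L : ℝ)^2 + (Lhat : ℝ)^2) * ∑ i, ‖φ (x i) - φ (x (m i))‖^2) := by
  set ε : Fin n → ℝ := fun i => νhat (t i) (φ (x i)) - y i
  have hpoint : ∀ i, ((νhat true (φ (x i)) - νhat false (φ (x i)))
      - (ν true (φ (x i)) - ν false (φ (x i)))) ^ 2 ≤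
        4 * (ε i ^ 2 + ε (m i) ^ 2
          + ((L : ℝ) ^ 2 + (Lhat : ℝ) ^ 2) * ‖φ (x i) - φ (x (m i))‖ ^ 2) := by
    intro i
    simpa only [ε, hy, hmt, ← dist_eq_norm] using
      effect_error_sq_le_of_lipschitz hν hνhat (t i) (φ (x i)) (φ (x (m i)))
  have htwins : ∑ i, ε (m i) ^ 2 = ∑ j, (w j : ℝ) * ε j ^ 2 := by
    simp only [hw, sum_comp_eq_sum_card_fiber_mul m (fun j => ε j ^ 2)]
  calc (1 / n : ℝ) * ∑ i, ((νhat true (φ (x i)) - νhat false (φ (x i)))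
        - (ν true (φ (x i)) - ν false (φ (x i)))) ^ 2
      ≤ (1 / n : ℝ) * ∑ i, 4 * (ε i ^ 2 + ε (m i) ^ 2
          + ((L : ℝ) ^ 2 + (Lhat : ℝ) ^ 2) * ‖φ (x i) - φ (x (m i))‖ ^ 2) := by
        gcongr with i; exact hpoint i
    _ = _ := by
        simp only [← mul_sum, sum_add_distrib, htwins, add_mul, one_mul]
        ring

/-- Theorem 1 of the ALRITE paper (noiseless-outcome formulation). -/
theorem stmt_3 {X : Type*} {d n : ℕ} (hn : 0 < n)
    (φ : X → EuclideanSpace ℝ (Fin d)) (L Lhat : NNReal)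
    (ν νhat : Bool → EuclideanSpace ℝ (Fin d) → ℝ)
    (hν : ∀ b, LipschitzWith L (ν b)) (hνhat : ∀ b, LipschitzWith Lhat (νhat b))
    (x : Fin n → X) (t : Fin n → Bool) (y : Fin n → ℝ)
    (hy : ∀ i, y i = ν (t i) (φ (x i)))
    (m : Fin n → Fin n)
    (hmt : ∀ i, t (m i) = !(t i))
    (hmmin : ∀ i j, t j = !(t i) → ‖φ (x i) - φ (x (m i))‖ ≤ ‖φ (x i) - φ (x j)‖)
    (w : Fin n → ℕ) (hw : ∀ j, w j = (Finset.univ.filter fun i => m i = j).card) :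
    (1 / n : ℝ) * ∑ i, ((νhat true (φ (x i)) - νhat false (φ (x i)))
        - (ν true (φ (x i)) - ν false (φ (x i))))^2 ≤
      (4 / n : ℝ) * ((∑ i, (1 + (w i : ℝ)) * (νhat (t i) (φ (x i)) - y i)^2)
        + ((L : ℝ)^2 + (Lhat : ℝ)^2) * ∑ i, ‖φ (x i) - φ (x (m i))‖^2) :=
  stmt_3_general φ L Lhat ν νhat hν hνhat x t y hy m hmt w hw
end

section
/- Let X be a random variable, T a {0,1}-valued random variable, and Y⁰ an integrable real random variable with Y⁰ independent of T given X (conditional exchangeability). Let φ be a measurable map and suppose E[Y⁰ | X] = ν⁰(φ(X)) a.s. for some measurable ν⁰. Then E[Y⁰ | φ(X), T = 0] = ν⁰(φ(X)) a.s. on {T = 0}. -/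
/-!
Conditional independence given `m = σ(X)` makes the conditional expectation factor,
`E[Y⁰ 1_{T = 0} | m] = E[Y⁰ | m] P(T = 0 | m)`, as one sees fibrewise under the conditional
expectation kernel. By the pull-out property, `Y⁰` and `E[Y⁰ | m] = ν⁰ ∘ φ ∘ X` therefore have the
same integral over every set `u ∩ {T = 0}` with `u ∈ m`, in particular for `u ∈ σ(φ ∘ X) ⊆ m`;
these are exactly the identities characterising the conditional expectation given `σ(φ ∘ X)`
under `μ[|T = 0]`.
-/

open MeasureTheory ProbabilityTheory

namespace ProbabilityTheory

variable {Ω β β' : Type*} {m : MeasurableSpace Ω} {mΩ : MeasurableSpace Ω} [StandardBorelSpace Ω]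
  {hm : m ≤ mΩ} {μ : Measure Ω} [IsFiniteMeasure μ]

theorem CondIndepFun.congr {_ : MeasurableSpace β} {_ : MeasurableSpace β'}
    {f f' : Ω → β} {g g' : Ω → β'} (hfg : CondIndepFun m hm f g μ)
    (hf : f =ᵐ[μ] f') (hg : g =ᵐ[μ] g') : CondIndepFun m hm f' g' μ := by
  rw [← condExpKernel_comp_trim (μ := μ) hm] at hf hg
  exact Kernel.IndepFun.congr' hfg (Measure.ae_ae_of_ae_comp hf) (Measure.ae_ae_of_ae_comp hg)

theorem CondIndepFun.ae_indepFun_condExpKernel {_ : MeasurableSpace β} {_ : MeasurableSpace β'}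
    [MeasurableSpace.CountablyGenerated (β × β')] {f : Ω → β} {g : Ω → β'}
    (hf : Measurable f) (hg : Measurable g) (hfg : CondIndepFun m hm f g μ) :
    ∀ᵐ ω ∂μ, IndepFun f g (condExpKernel μ m ω) := by
  rw [condIndepFun_iff_map_prod_eq_prod_map_map hf hg] at hfg
  filter_upwards [ae_of_ae_trim hm hfg] with ω hω
  rw [indepFun_iff_map_prod_eq_prod_map_map hf.aemeasurable hg.aemeasurable]
  simpa [Kernel.map_apply _ hf, Kernel.map_apply _ hg, Kernel.map_apply _ (hf.prodMk hg),
    Kernel.prod_apply] using hω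

theorem CondIndepFun.condExp_mul {Y Z : Ω → ℝ} (hY : Measurable Y) (hZ : Measurable Z)
    (hYZ : CondIndepFun m hm Y Z μ) (hY_int : Integrable Y μ) (hZ_int : Integrable Z μ)
    (hYZ_int : Integrable (Y * Z) μ) :
    μ[Y * Z | m] =ᵐ[μ] μ[Y | m] * μ[Z | m] := by
  filter_upwards [condExp_ae_eq_integral_condExpKernel hm hYZ_int,
    condExp_ae_eq_integral_condExpKernel hm hY_int, condExp_ae_eq_integral_condExpKernel hm hZ_int,
    hYZ.ae_indepFun_condExpKernel hY hZ] with ω hYZω hYω hZω hindep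
  rw [Pi.mul_apply, hYZω, hYω, hZω]
  exact hindep.integral_mul_eq_mul_integral hY.aestronglyMeasurable hZ.aestronglyMeasurable

theorem CondIndepFun.setIntegral_inter_preimage_eq_setIntegral_condExp {_ : MeasurableSpace β}
    {Y : Ω → ℝ} {T : Ω → β} (hY : Measurable Y) (hT : Measurable T)
    (hYT : CondIndepFun m hm Y T μ) (hY_int : Integrable Y μ) {t : Set β} (ht : MeasurableSet t)
    {u : Set Ω} (hu : MeasurableSet[m] u) :
    ∫ ω in u ∩ T ⁻¹' t, Y ω ∂μ = ∫ ω in u ∩ T ⁻¹' t, μ[Y | m] ω ∂μ := by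
  set B := T ⁻¹' t
  have hB : MeasurableSet B := hT ht
  have indicator_eq_mul (f : Ω → ℝ) : B.indicator f = f * B.indicator 1 := by
    ext ω; by_cases hω : ω ∈ B <;> simp [hω]
  have h1_int : Integrable (B.indicator (1 : Ω → ℝ)) μ := (integrable_const 1).indicator hB
  have hY1 : CondIndepFun m hm Y (B.indicator (1 : Ω → ℝ)) μ := by
    have h1_comp : B.indicator (1 : Ω → ℝ) = t.indicator 1 ∘ T := by
      ext ω; by_cases hω : T ω ∈ t <;> simp [B, hω]
    rw [h1_comp]
    exact hYT.comp measurable_id (measurable_one.indicator ht)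
  calc ∫ ω in u ∩ B, Y ω ∂μ
      = ∫ ω in u, μ[B.indicator Y | m] ω ∂μ := by
        rw [setIntegral_condExp hm (hY_int.indicator hB) hu, setIntegral_indicator hB]
    _ = ∫ ω in u, μ[μ[Y | m] * B.indicator 1 | m] ω ∂μ := by
        have hY1_int : Integrable (Y * B.indicator 1) μ :=
          indicator_eq_mul Y ▸ hY_int.indicator hB
        have hcondY1_int : Integrable (μ[Y | m] * B.indicator 1) μ :=
          indicator_eq_mul _ ▸ integrable_condExp.indicator hB
        refine integral_congr_ae (ae_restrict_of_ae ?_)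
        rw [indicator_eq_mul Y]
        exact (hY1.condExp_mul hY (measurable_one.indicator hB) hY_int h1_int hY1_int).trans
          (condExp_mul_of_stronglyMeasurable_left stronglyMeasurable_condExp hcondY1_int
            h1_int).symm
    _ = ∫ ω in u ∩ B, μ[Y | m] ω ∂μ := by
        rw [← indicator_eq_mul, setIntegral_condExp hm (integrable_condExp.indicator hB) hu,
          setIntegral_indicator hB]

end ProbabilityTheory

theorem MeasureTheory.condExp_cond_ae_eq_of_forall_setIntegral_inter_eq {Ω E : Type*}
    [NormedAddCommGroup E] [NormedSpace ℝ E] [CompleteSpace E]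
    {m mΩ : MeasurableSpace Ω} {μ : Measure Ω} (hm : m ≤ mΩ) {A : Set Ω}
    {f g : Ω → E} (hf : Integrable f μ) (hg : Integrable g μ) (hgm : StronglyMeasurable[m] g)
    (hfg : ∀ s, MeasurableSet[m] s → ∫ x in s ∩ A, f x ∂μ = ∫ x in s ∩ A, g x ∂μ) :
    μ[|A][f | m] =ᵐ[μ[|A]] g := by
  rcases eq_or_ne (μ A) 0 with hA0 | hA0
  · rw [cond_eq_zero_of_meas_eq_zero hA0]
    simp only [Filter.EventuallyEq, ae_zero, Filter.eventually_bot]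
  have integrable_cond {h : Ω → E} (h_int : Integrable h μ) : Integrable h μ[|A] :=
    h_int.restrict.smul_measure (ENNReal.inv_ne_top.mpr hA0)
  refine (ae_eq_condExp_of_forall_setIntegral_eq hm (integrable_cond hf)
    (fun s _ _ ↦ (integrable_cond hg).integrableOn) (fun s hs _ ↦ ?_)
    hgm.aestronglyMeasurable).symm
  rw [ProbabilityTheory.cond, Measure.restrict_smul, integral_smul_measure, integral_smul_measure,
    Measure.restrict_restrict (hm s hs), hfg s hs]

theorem stmt_6_general {Ω 𝒳 𝒵 : Type*} [MeasurableSpace Ω] [StandardBorelSpace Ω]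
    [MeasurableSpace 𝒳] [MeasurableSpace 𝒵]
    (μ : Measure Ω) [IsProbabilityMeasure μ]
    (X : Ω → 𝒳)
    (T : Ω → Bool) (hT : Measurable T)
    (Y0 : Ω → ℝ) (hY0 : Integrable Y0 μ)
    (hXle : MeasurableSpace.comap X inferInstance ≤ ‹MeasurableSpace Ω›)
    -- conditional exchangeability: Y⁰ ⟂ T | X
    (hexch : CondIndepFun (MeasurableSpace.comap X inferInstance) hXle Y0 T μ)
    (φ : 𝒳 → 𝒵) (hφ : Measurable φ)
    (ν0 : 𝒵 → ℝ) (hν0 : Measurable ν0)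
    (h : μ[Y0 | MeasurableSpace.comap X inferInstance] =ᵐ[μ] fun ω => ν0 (φ (X ω))) :
    (μ[|{ω | T ω = false}])[Y0 | MeasurableSpace.comap (fun ω => φ (X ω)) inferInstance]
      =ᵐ[μ[|{ω | T ω = false}]] fun ω => ν0 (φ (X ω)) := by
  have hφX : Measurable[MeasurableSpace.comap X inferInstance] (fun ω ↦ φ (X ω)) :=
    hφ.comp (comap_measurable X)
  -- the kernel computations need a measurable version of `Y0`
  obtain ⟨Y, hY_meas, hY0Y⟩ := hY0.1
  have hY_int : Integrable Y μ := hY0.congr hY0Y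
  have hYT := hexch.congr hY0Y .rfl
  refine condExp_cond_ae_eq_of_forall_setIntegral_inter_eq (hφX.comap_le.trans hXle) hY0
    (integrable_condExp.congr h) (hν0.comp (comap_measurable _)).stronglyMeasurable
    fun s hs ↦ ?_
  calc ∫ ω in s ∩ T ⁻¹' {false}, Y0 ω ∂μ
      = ∫ ω in s ∩ T ⁻¹' {false}, Y ω ∂μ := integral_congr_ae (ae_restrict_of_ae hY0Y)
    _ = ∫ ω in s ∩ T ⁻¹' {false}, μ[Y | MeasurableSpace.comap X inferInstance] ω ∂μ :=
        hYT.setIntegral_inter_preimage_eq_setIntegral_condExp hY_meas.measurable hT hY_int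
          (measurableSet_singleton false) (hφX.comap_le s hs)
    _ = ∫ ω in s ∩ T ⁻¹' {false}, ν0 (φ (X ω)) ∂μ :=
        integral_congr_ae (ae_restrict_of_ae ((condExp_congr_ae hY0Y.symm).trans h))

theorem stmt_6 {Ω 𝒳 𝒵 : Type*} [MeasurableSpace Ω] [StandardBorelSpace Ω]
    [MeasurableSpace 𝒳] [MeasurableSpace 𝒵]
    (μ : Measure Ω) [IsProbabilityMeasure μ]
    (X : Ω → 𝒳) (hX : Measurable X)
    (T : Ω → Bool) (hT : Measurable T)
    (Y0 : Ω → ℝ) (hY0 : Integrable Y0 μ)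
    (hXle : MeasurableSpace.comap X inferInstance ≤ ‹MeasurableSpace Ω›)
    -- conditional exchangeability: Y⁰ ⟂ T | X
    (hexch : CondIndepFun (MeasurableSpace.comap X inferInstance) hXle Y0 T μ)
    (φ : 𝒳 → 𝒵) (hφ : Measurable φ)
    (ν0 : 𝒵 → ℝ) (hν0 : Measurable ν0)
    (h : μ[Y0 | MeasurableSpace.comap X inferInstance] =ᵐ[μ] fun ω => ν0 (φ (X ω))) :
    (μ[|{ω | T ω = false}])[Y0 | MeasurableSpace.comap (fun ω => φ (X ω)) inferInstance]
      =ᵐ[μ[|{ω | T ω = false}]] fun ω => ν0 (φ (X ω)) :=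
  stmt_6_general μ X T hT Y0 hY0 hXle hexch φ hφ ν0 hν0 h
end

section
/- Under SUTVA and conditional exchangeability, the Robinson decomposition holds: Y - m(X) = (T - η(X))τ(X) + ε with E[ε | X, T] = 0, where m(x) = E[Y | X = x], η(x) = P(T = 1 | X = x), and τ(x) = E[Y¹ - Y⁰ | X = x]. -/
/-!
Conditional independence of `(Y⁰, Y¹)` and `T` given `X` means that conditioning a function of
the potential outcomes on `(X, T)` gives the same result as conditioning on `X` alone. Writing
`Y = Y⁰ + T (Y¹ - Y⁰)` and pulling out the `(X, T)`-measurable factor `T` gives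
`E[Y | X, T] = E[Y⁰ | X] + T τ(X)`, and then the tower property gives
`m(X) = E[Y⁰ | X] + η(X) τ(X)`. Subtracting these two identities,
`E[Y - m(X) - (T - η(X)) τ(X) | X, T] = 0`.
-/

open MeasureTheory ProbabilityTheory

section

variable {Ω : Type*} {m mΩ : MeasurableSpace Ω} {μ : Measure Ω}

theorem setIntegral_mul_condExp_of_stronglyMeasurable_left (hm : m ≤ mΩ)
    [SigmaFinite (μ.trim hm)] {f g : Ω → ℝ} (hg : StronglyMeasurable[m] g)
    (hgf : Integrable (g * f) μ) (hf : Integrable f μ) {A : Set Ω} (hA : MeasurableSet[m] A) :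
    ∫ ω in A, g ω * (μ[f | m]) ω ∂μ = ∫ ω in A, g ω * f ω ∂μ :=
  (setIntegral_congr_ae (hm A hA) ((condExp_mul_of_stronglyMeasurable_left hg hgf hf).mono
    fun _ h _ => h.symm)).trans (setIntegral_condExp hm hgf hA)

theorem mul_indicator_one_eq_indicator (f : Ω → ℝ) (s : Set Ω) :
    f * s.indicator (fun _ => 1) = s.indicator f := by
  ext ω
  by_cases hω : ω ∈ s <;> simp [hω]

theorem setIntegral_inter_eq_setIntegral_mul_indicator {A B : Set Ω} (hB : MeasurableSet B)
    (f : Ω → ℝ) :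
    ∫ ω in A ∩ B, f ω ∂μ = ∫ ω in A, f ω * B.indicator (fun _ => (1 : ℝ)) ω ∂μ := by
  rw [← setIntegral_indicator hB, ← mul_indicator_one_eq_indicator]
  rfl

theorem condExp_indicator_one_nonneg (B : Set Ω) : 0 ≤ᵐ[μ] μ⟦B | m⟧ :=
  condExp_nonneg (.of_forall (Set.indicator_nonneg fun _ _ => zero_le_one))

theorem norm_condExp_indicator_one_le (B : Set Ω) : ∀ᵐ ω ∂μ, ‖(μ⟦B | m⟧) ω‖ ≤ 1 := by
  refine ae_bdd_abs_condExp_of_ae_bdd_abs (R := (1 : ℝ)) (.of_forall fun ω => ?_)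
  by_cases hω : ω ∈ B <;> simp [hω]

theorem setIntegral_eq_of_isPiSystem {E : Type*} [NormedAddCommGroup E] [NormedSpace ℝ E]
    {m' : MeasurableSpace Ω} (hm' : m' ≤ mΩ) {p : Set (Set Ω)} (hgen : m' = .generateFrom p)
    (hp : IsPiSystem p) {f g : Ω → E} (hf : Integrable f μ) (hg : Integrable g μ)
    (huniv : ∫ ω, f ω ∂μ = ∫ ω, g ω ∂μ) (hpi : ∀ s ∈ p, ∫ ω in s, f ω ∂μ = ∫ ω in s, g ω ∂μ)
    {s : Set Ω} (hs : MeasurableSet[m'] s) : ∫ ω in s, f ω ∂μ = ∫ ω in s, g ω ∂μ := by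
  induction s, hs using MeasurableSpace.induction_on_inter hgen hp with
  | empty => simp
  | basic t ht => exact hpi t ht
  | compl t ht ih =>
    have hf' := integral_add_compl (hm' t ht) hf
    have hg' := integral_add_compl (hm' t ht) hg
    rw [ih] at hf'
    rw [← add_right_inj (∫ ω in t, g ω ∂μ), hf', hg', huniv]
  | iUnion t hdisj ht ih =>
    rw [integral_iUnion (fun i => hm' _ (ht i)) hdisj hf.integrableOn,
      integral_iUnion (fun i => hm' _ (ht i)) hdisj hg.integrableOn]
    exact tsum_congr ih

theorem sup_eq_generateFrom_image2_inter (m₁ m₂ : MeasurableSpace Ω) :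
    m₁ ⊔ m₂ =
      .generateFrom (Set.image2 (· ∩ ·) {A | MeasurableSet[m₁] A} {B | MeasurableSet[m₂] B}) := by
  apply le_antisymm
  · refine sup_le (fun A hA => ?_) (fun B hB => ?_)
    · exact .basic _ ⟨A, hA, Set.univ, .univ, Set.inter_univ A⟩
    · exact .basic _ ⟨Set.univ, .univ, B, hB, Set.univ_inter B⟩
  · refine MeasurableSpace.generateFrom_le ?_
    rintro _ ⟨A, hA, B, hB, rfl⟩
    exact (le_sup_left (a := m₁) (b := m₂) A hA).inter (le_sup_right (a := m₁) (b := m₂) B hB)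

theorem isPiSystem_image2_inter (m₁ m₂ : MeasurableSpace Ω) :
    IsPiSystem (Set.image2 (· ∩ ·) {A | MeasurableSet[m₁] A} {B | MeasurableSet[m₂] B}) := by
  rintro _ ⟨A, hA, B, hB, rfl⟩ _ ⟨A', hA', B', hB', rfl⟩ -
  exact ⟨A ∩ A', hA.inter hA', B ∩ B', hB.inter hB', Set.inter_inter_inter_comm A A' B B'⟩

end

namespace ProbabilityTheory

variable {Ω : Type*} {m m₁ m₂ mΩ : MeasurableSpace Ω} [StandardBorelSpace Ω] {μ : Measure Ω}
  [IsFiniteMeasure μ] {hm : m ≤ mΩ} {f g D : Ω → ℝ} {C : ℝ}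

theorem CondIndepFun.congr_left {β γ : Type*} [MeasurableSpace β] [MeasurableSpace γ]
    {f f' : Ω → β} {g : Ω → γ} (h : CondIndepFun m hm f g μ) (hff' : f =ᵐ[μ] f') :
    CondIndepFun m hm f' g μ :=
  Kernel.IndepFun.congr' h
    (Measure.ae_ae_of_ae_comp (by rwa [condExpKernel_comp_trim])) (.of_forall fun _ => .rfl)

-- Conditional independence only speaks about indicators; comparing these two measures on `m₁`
-- transfers it to every `m₁`-measurable integrand.
theorem CondIndep.trim_restrict_inter_eq (hm₁ : m₁ ≤ mΩ) (hm₂ : m₂ ≤ mΩ)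
    (h : CondIndep m m₁ m₂ hm μ) {A B : Set Ω} (hA : MeasurableSet[m] A)
    (hB : MeasurableSet[m₂] B) :
    (μ.restrict (A ∩ B)).trim hm₁
      = ((μ.restrict A).withDensity fun ω => ENNReal.ofReal ((μ⟦B | m⟧) ω)).trim hm₁ := by
  refine @Measure.ext _ m₁ _ _ fun s hs => ?_
  have hs' : MeasurableSet s := hm₁ s hs
  rw [trim_measurableSet_eq hm₁ hs, trim_measurableSet_eq hm₁ hs, Measure.restrict_apply hs',
    withDensity_apply _ hs', Measure.restrict_restrict hs',
    ← ofReal_integral_eq_lintegral_ofReal integrable_condExp.integrableOn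
      (ae_restrict_of_ae (condExp_indicator_one_nonneg B)), ← ofReal_measureReal]
  congr 1
  have hind := (condIndep_iff m m₁ m₂ hm hm₁ hm₂ μ).1 h s B hs hB
  calc μ.real (s ∩ (A ∩ B))
      = ∫ ω in A, (s ∩ B).indicator (fun _ => (1 : ℝ)) ω ∂μ := by
        rw [setIntegral_indicator (hs'.inter (hm₂ B hB)), setIntegral_const, smul_eq_mul, mul_one,
          Set.inter_left_comm]
    _ = ∫ ω in A, (μ⟦s ∩ B | m⟧) ω ∂μ :=
        (setIntegral_condExp hm ((integrable_const 1).indicator (hs'.inter (hm₂ B hB))) hA).symm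
    _ = ∫ ω in A, (μ⟦B | m⟧) ω * (μ⟦s | m⟧) ω ∂μ := by
        refine setIntegral_congr_ae (hm A hA) ?_
        filter_upwards [hind] with ω hω _
        rw [hω, Pi.mul_apply, mul_comm]
    _ = ∫ ω in A, (μ⟦B | m⟧) ω * s.indicator (fun _ => (1 : ℝ)) ω ∂μ := by
        refine setIntegral_mul_condExp_of_stronglyMeasurable_left hm stronglyMeasurable_condExp ?_
          ((integrable_const 1).indicator hs') hA
        rw [mul_indicator_one_eq_indicator]
        exact integrable_condExp.indicator hs'
    _ = ∫ ω in s ∩ A, (μ⟦B | m⟧) ω ∂μ := by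
        rw [Set.inter_comm, setIntegral_inter_eq_setIntegral_mul_indicator hs']

theorem CondIndep.setIntegral_inter_eq_setIntegral_mul_condExp (hm₁ : m₁ ≤ mΩ) (hm₂ : m₂ ≤ mΩ)
    (h : CondIndep m m₁ m₂ hm μ) {A B : Set Ω} (hA : MeasurableSet[m] A)
    (hB : MeasurableSet[m₂] B) (hf : StronglyMeasurable[m₁] f) :
    ∫ ω in A ∩ B, f ω ∂μ = ∫ ω in A, (μ⟦B | m⟧) ω * f ω ∂μ := by
  rw [integral_trim hm₁ hf, h.trim_restrict_inter_eq hm₁ hm₂ hA hB, ← integral_trim hm₁ hf,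
    integral_withDensity_eq_integral_toReal_smul
      (stronglyMeasurable_condExp.mono hm).measurable.ennreal_ofReal
      (.of_forall fun _ => ENNReal.ofReal_lt_top)]
  refine setIntegral_congr_ae (hm A hA) ?_
  filter_upwards [condExp_indicator_one_nonneg B] with ω hω _
  rw [ENNReal.toReal_ofReal hω, smul_eq_mul]

theorem CondIndep.setIntegral_inter_condExp (hm₁ : m₁ ≤ mΩ) (hm₂ : m₂ ≤ mΩ)
    (h : CondIndep m m₁ m₂ hm μ) {A B : Set Ω} (hA : MeasurableSet[m] A)
    (hB : MeasurableSet[m₂] B) (hf : StronglyMeasurable[m₁] f)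
    (hfi : Integrable f μ) :
    ∫ ω in A ∩ B, (μ[f | m]) ω ∂μ = ∫ ω in A ∩ B, f ω ∂μ := by
  have hB' : MeasurableSet B := hm₂ B hB
  have hB_int : Integrable (B.indicator fun _ => (1 : ℝ)) μ := (integrable_const 1).indicator hB'
  calc ∫ ω in A ∩ B, (μ[f | m]) ω ∂μ
      = ∫ ω in A, (μ[f | m]) ω * B.indicator (fun _ => (1 : ℝ)) ω ∂μ :=
        setIntegral_inter_eq_setIntegral_mul_indicator hB' _
    _ = ∫ ω in A, (μ[f | m]) ω * (μ⟦B | m⟧) ω ∂μ := by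
        refine (setIntegral_mul_condExp_of_stronglyMeasurable_left hm stronglyMeasurable_condExp
          ?_ hB_int hA).symm
        rw [mul_indicator_one_eq_indicator]
        exact integrable_condExp.indicator hB'
    _ = ∫ ω in A, (μ⟦B | m⟧) ω * f ω ∂μ := by
        simp_rw [mul_comm ((μ[f | m]) _)]
        exact setIntegral_mul_condExp_of_stronglyMeasurable_left hm stronglyMeasurable_condExp
          (hfi.bdd_mul integrable_condExp.1 (norm_condExp_indicator_one_le B)) hfi hA
    _ = ∫ ω in A ∩ B, f ω ∂μ :=
        (h.setIntegral_inter_eq_setIntegral_mul_condExp hm₁ hm₂ hA hB hf).symm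

theorem CondIndep.condExp_sup_ae_eq (hm₁ : m₁ ≤ mΩ) (hm₂ : m₂ ≤ mΩ)
    (h : CondIndep m m₁ m₂ hm μ) (hf : StronglyMeasurable[m₁] f)
    (hfi : Integrable f μ) :
    μ[f | m ⊔ m₂] =ᵐ[μ] μ[f | m] := by
  refine (ae_eq_condExp_of_forall_setIntegral_eq (sup_le hm hm₂) hfi
    (fun _ _ _ => integrable_condExp.integrableOn) (fun s hs _ => ?_)
    (stronglyMeasurable_condExp.mono (le_sup_left : m ≤ m ⊔ m₂)).aestronglyMeasurable).symm
  refine setIntegral_eq_of_isPiSystem (sup_le hm hm₂) (sup_eq_generateFrom_image2_inter m m₂)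
    (isPiSystem_image2_inter m m₂) integrable_condExp hfi (integral_condExp hm) ?_ hs
  rintro _ ⟨A, hA, B, hB, rfl⟩
  exact h.setIntegral_inter_condExp hm₁ hm₂ hA hB hf hfi

theorem CondIndep.condExp_sup_add_mul_ae_eq (hm₁ : m₁ ≤ mΩ) (hm₂ : m₂ ≤ mΩ)
    (h : CondIndep m m₁ m₂ hm μ) (hf : StronglyMeasurable[m₁] f) (hfi : Integrable f μ)
    (hg : StronglyMeasurable[m₁] g) (hgi : Integrable g μ)
    (hD : StronglyMeasurable[m₂] D) (hDC : ∀ ω, ‖D ω‖ ≤ C) :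
    μ[f + D * g | m ⊔ m₂] =ᵐ[μ] μ[f | m] + D * μ[g | m] := by
  have hD_sup : StronglyMeasurable[m ⊔ m₂] D := hD.mono le_sup_right
  calc μ[f + D * g | m ⊔ m₂]
      =ᵐ[μ] μ[f | m ⊔ m₂] + μ[D * g | m ⊔ m₂] :=
        condExp_add hfi (hgi.bdd_mul (hD.mono hm₂).aestronglyMeasurable (.of_forall hDC)) _
    _ =ᵐ[μ] μ[f | m ⊔ m₂] + D * μ[g | m ⊔ m₂] :=
        .add .rfl (condExp_stronglyMeasurable_mul_of_bound (sup_le hm hm₂) hD_sup hgi C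
          (.of_forall hDC))
    _ =ᵐ[μ] μ[f | m] + D * μ[g | m] :=
        (h.condExp_sup_ae_eq hm₁ hm₂ hf hfi).add (.mul .rfl (h.condExp_sup_ae_eq hm₁ hm₂ hg hgi))

theorem CondIndep.condExp_add_mul_ae_eq (hm₁ : m₁ ≤ mΩ) (hm₂ : m₂ ≤ mΩ)
    (h : CondIndep m m₁ m₂ hm μ) (hf : StronglyMeasurable[m₁] f) (hfi : Integrable f μ)
    (hg : StronglyMeasurable[m₁] g) (hgi : Integrable g μ)
    (hD : StronglyMeasurable[m₂] D) (hDC : ∀ ω, ‖D ω‖ ≤ C) :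
    μ[f + D * g | m] =ᵐ[μ] μ[f | m] + μ[D | m] * μ[g | m] := by
  have hDi : Integrable D μ :=
    (integrable_const C).mono' (hD.mono hm₂).aestronglyMeasurable (.of_forall hDC)
  calc μ[f + D * g | m]
      =ᵐ[μ] μ[μ[f + D * g | m ⊔ m₂] | m] :=
        (condExp_condExp_of_le le_sup_left (sup_le hm hm₂)).symm
    _ =ᵐ[μ] μ[μ[f | m] + D * μ[g | m] | m] :=
        condExp_congr_ae (h.condExp_sup_add_mul_ae_eq hm₁ hm₂ hf hfi hg hgi hD hDC)
    _ =ᵐ[μ] μ[μ[f | m] | m] + μ[D * μ[g | m] | m] :=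
        condExp_add integrable_condExp
          (integrable_condExp.bdd_mul (hD.mono hm₂).aestronglyMeasurable (.of_forall hDC)) _
    _ =ᵐ[μ] μ[f | m] + μ[D | m] * μ[g | m] := by
        rw [condExp_of_stronglyMeasurable hm stronglyMeasurable_condExp integrable_condExp]
        exact .add .rfl (condExp_mul_of_stronglyMeasurable_right stronglyMeasurable_condExp
          (integrable_condExp.bdd_mul (hD.mono hm₂).aestronglyMeasurable (.of_forall hDC)) hDi)

theorem CondIndep.condExp_sup_robinson_residual_ae_eq_zero (hm₁ : m₁ ≤ mΩ) (hm₂ : m₂ ≤ mΩ)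
    (h : CondIndep m m₁ m₂ hm μ) (hf : StronglyMeasurable[m₁] f) (hfi : Integrable f μ)
    (hg : StronglyMeasurable[m₁] g) (hgi : Integrable g μ)
    (hD : StronglyMeasurable[m₂] D) (hDC : ∀ ω, ‖D ω‖ ≤ C) :
    μ[f + D * g - μ[f + D * g | m] - (D - μ[D | m]) * μ[g | m] | m ⊔ m₂] =ᵐ[μ] 0 := by
  have hDi : Integrable D μ :=
    (integrable_const C).mono' (hD.mono hm₂).aestronglyMeasurable (.of_forall hDC)
  have hη_bdd : ∀ᵐ ω ∂μ, ‖(μ[D | m]) ω‖ ≤ C :=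
    ae_bdd_abs_condExp_of_ae_bdd_abs (.of_forall hDC)
  set W := μ[f + D * g | m] + (D - μ[D | m]) * μ[g | m]
  have hle : m ≤ m ⊔ m₂ := le_sup_left
  have hW : StronglyMeasurable[m ⊔ m₂] W :=
    (stronglyMeasurable_condExp.mono hle).add (((hD.mono le_sup_right).sub
      (stronglyMeasurable_condExp.mono hle)).mul (stronglyMeasurable_condExp.mono hle))
  have hWi : Integrable W μ := by
    refine integrable_condExp.add (integrable_condExp.bdd_mul (c := C + C)
      ((hDi.sub integrable_condExp).aestronglyMeasurable) ?_)
    filter_upwards [hη_bdd] with ω hω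
    exact (norm_sub_le _ _).trans (add_le_add (hDC ω) hω)
  have hYi : Integrable (f + D * g) μ :=
    hfi.add (hgi.bdd_mul (hD.mono hm₂).aestronglyMeasurable (.of_forall hDC))
  calc μ[f + D * g - μ[f + D * g | m] - (D - μ[D | m]) * μ[g | m] | m ⊔ m₂]
      = μ[f + D * g - W | m ⊔ m₂] := by rw [sub_sub]
    _ =ᵐ[μ] μ[f + D * g | m ⊔ m₂] - μ[W | m ⊔ m₂] := condExp_sub hYi hWi _
    _ = μ[f + D * g | m ⊔ m₂] - W := by
        rw [condExp_of_stronglyMeasurable (sup_le hm hm₂) hW hWi]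
    _ =ᵐ[μ] 0 := by
        filter_upwards [h.condExp_sup_add_mul_ae_eq hm₁ hm₂ hf hfi hg hgi hD hDC,
          h.condExp_add_mul_ae_eq hm₁ hm₂ hf hfi hg hgi hD hDC] with ω hsup hcond
        simp only [W, Pi.sub_apply, Pi.add_apply, Pi.mul_apply, Pi.zero_apply, hsup, hcond]
        ring

end ProbabilityTheory

theorem stmt_12_general {Ω 𝒳 : Type*} [MeasurableSpace Ω] [StandardBorelSpace Ω] [MeasurableSpace 𝒳]
    (μ : Measure Ω) [IsProbabilityMeasure μ]
    (X : Ω → 𝒳)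
    (T : Ω → Bool)
    (Y0 Y1 : Ω → ℝ) (hY0 : Integrable Y0 μ) (hY1 : Integrable Y1 μ)
    (Y : Ω → ℝ) (hSUTVA : ∀ ω, Y ω = if T ω then Y1 ω else Y0 ω)
    (hXle : MeasurableSpace.comap X inferInstance ≤ ‹MeasurableSpace Ω›)
    (hTle : MeasurableSpace.comap T inferInstance ≤ ‹MeasurableSpace Ω›)
    -- conditional exchangeability: (Y⁰, Y¹) ⟂ T | X
    (hexch : CondIndepFun (MeasurableSpace.comap X inferInstance) hXle
      (fun ω => (Y0 ω, Y1 ω)) T μ)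
    (Tind : Ω → ℝ) (hTind : ∀ ω, Tind ω = if T ω then (1:ℝ) else 0)
    (m : Ω → ℝ) (hm : m = μ[Y | MeasurableSpace.comap X inferInstance])
    (η : Ω → ℝ) (hη : η = μ[Tind | MeasurableSpace.comap X inferInstance])
    (τ : Ω → ℝ)
    (hτ : τ = μ[(fun ω => Y1 ω - Y0 ω) | MeasurableSpace.comap X inferInstance]) :
    μ[(fun ω => Y ω - m ω - (Tind ω - η ω) * τ ω) |
        MeasurableSpace.comap X inferInstance ⊔ MeasurableSpace.comap T inferInstance]
      =ᵐ[μ] 0 := by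
  subst hm hη hτ
  -- `Y0`, `Y1` need not be measurable: replace them by measurable modifications
  obtain ⟨Y0', hY0'm, hY0'⟩ := hY0.1
  obtain ⟨Y1', hY1'm, hY1'⟩ := hY1.1
  set Z : Ω → ℝ × ℝ := fun ω => (Y0' ω, Y1' ω)
  have hZ : Measurable Z := hY0'm.measurable.prodMk hY1'm.measurable
  have hind := (condIndepFun_iff_condIndep _ _ _ _ μ).1 <| hexch.congr_left <| by
    filter_upwards [hY0', hY1'] with ω h0 h1
    rw [h0, h1]
  have hY0'Z : Measurable[MeasurableSpace.comap Z inferInstance] Y0' :=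
    measurable_fst.comp (comap_measurable Z)
  have hY1'Z : Measurable[MeasurableSpace.comap Z inferInstance] Y1' :=
    measurable_snd.comp (comap_measurable Z)
  have hTind_T : StronglyMeasurable[MeasurableSpace.comap T inferInstance] Tind := by
    rw [show Tind = (fun b : Bool => if b then (1 : ℝ) else 0) ∘ T from funext hTind]
    exact (measurable_from_top.comp (comap_measurable T)).stronglyMeasurable
  have hY : Y =ᵐ[μ] Y0' + Tind * (Y1' - Y0') := by
    filter_upwards [hY0', hY1'] with ω h0 h1
    simp only [hSUTVA ω, hTind ω, Pi.add_apply, Pi.mul_apply, Pi.sub_apply, h0, h1]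
    split_ifs <;> ring
  have hTind_le : ∀ ω, ‖Tind ω‖ ≤ 1 := fun ω => by rw [hTind ω]; split_ifs <;> simp
  refine .trans (condExp_congr_ae ?_) (hind.condExp_sup_robinson_residual_ae_eq_zero hZ.comap_le
    hTle hY0'Z.stronglyMeasurable (hY0.congr hY0') (hY1'Z.sub hY0'Z).stronglyMeasurable
    ((hY1.congr hY1').sub (hY0.congr hY0')) hTind_T hTind_le)
  filter_upwards [hY, condExp_congr_ae (m := MeasurableSpace.comap X inferInstance) hY,
    condExp_congr_ae (m := MeasurableSpace.comap X inferInstance) (hY1'.sub hY0')]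
    with ω hYω hmω hτω
  simp only [Pi.sub_apply, Pi.mul_apply] at hYω hmω hτω ⊢
  rw [hYω, hmω, ← hτω]
  rfl

/-- Robinson's decomposition: the residual `ε = Y - m(X) - (T - η(X)) τ(X)` satisfies
`E[ε | X, T] = 0` under SUTVA and conditional exchangeability. -/
theorem stmt_12 {Ω 𝒳 : Type*} [MeasurableSpace Ω] [StandardBorelSpace Ω] [MeasurableSpace 𝒳]
    (μ : Measure Ω) [IsProbabilityMeasure μ]
    (X : Ω → 𝒳) (hX : Measurable X)
    (T : Ω → Bool) (hT : Measurable T)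
    (Y0 Y1 : Ω → ℝ) (hY0 : Integrable Y0 μ) (hY1 : Integrable Y1 μ)
    (Y : Ω → ℝ) (hSUTVA : ∀ ω, Y ω = if T ω then Y1 ω else Y0 ω)
    (hXle : MeasurableSpace.comap X inferInstance ≤ ‹MeasurableSpace Ω›)
    (hTle : MeasurableSpace.comap T inferInstance ≤ ‹MeasurableSpace Ω›)
    -- conditional exchangeability: (Y⁰, Y¹) ⟂ T | X
    (hexch : CondIndepFun (MeasurableSpace.comap X inferInstance) hXle
      (fun ω => (Y0 ω, Y1 ω)) T μ)
    (Tind : Ω → ℝ) (hTind : ∀ ω, Tind ω = if T ω then (1:ℝ) else 0)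
    (m : Ω → ℝ) (hm : m = μ[Y | MeasurableSpace.comap X inferInstance])
    (η : Ω → ℝ) (hη : η = μ[Tind | MeasurableSpace.comap X inferInstance])
    (τ : Ω → ℝ)
    (hτ : τ = μ[(fun ω => Y1 ω - Y0 ω) | MeasurableSpace.comap X inferInstance]) :
    μ[(fun ω => Y ω - m ω - (Tind ω - η ω) * τ ω) |
        MeasurableSpace.comap X inferInstance ⊔ MeasurableSpace.comap T inferInstance]
      =ᵐ[μ] 0 :=
  stmt_12_general μ X T Y0 Y1 hY0 hY1 Y hSUTVA hXle hTle hexch Tind hTind m hm η hη τ hτ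
end
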